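/- Let q ∈ [0,1) and let f : ℝ → ℝ be twice continuously differentiable with bounded second derivative. Then for every s ∈ (q,1], the function s ↦ ∫ f(y√(s−q)) dγ(y) is differentiable at s with derivative (1/2) ∫ f''(y√(s−q)) dγ(y). -/

import Mathlib

open MeasureTheory Real

local notation "γ" => ProbabilityTheory.gaussianReal 0 1

/-!
Differentiating under the integral sign, with domination by a quadratic polynomial in `y`
(which is `γ`-integrable since Gaussians have all moments), the derivative is
`∫ y f'(y√(s−q)) dγ(y) / (2√(s−q))`. Stein's lemma `∫ y g(y) dγ(y) = ∫ g' dγ`, which is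
integration by parts against the density `φ` using `φ' = -y φ`, applied to
`g(y) = f'(y√(s−q))` turns the numerator into `√(s−q) ∫ f''(y√(s−q)) dγ(y)`.
-/

open ProbabilityTheory

lemma abs_le_abs_add_mul_abs_of_abs_deriv_le {g : ℝ → ℝ} (hg : Differentiable ℝ g) {x M : ℝ}
    (hM : ∀ u, |u| ≤ |x| → |deriv g u| ≤ M) : |g x| ≤ |g 0| + M * |x| := by
  have h := (convex_Icc (-|x|) |x|).norm_image_sub_le_of_norm_deriv_le (fun u _ => hg u)
    (fun u hu => hM u (abs_le.mpr hu)) ⟨neg_nonpos.mpr (abs_nonneg x), abs_nonneg x⟩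
    (abs_le.mp le_rfl)
  rw [Real.norm_eq_abs, Real.norm_eq_abs, sub_zero] at h
  linarith [abs_sub_abs_le_abs_sub (g x) (g 0)]

lemma abs_le_of_abs_deriv_le_mul_one_add_abs {f : ℝ → ℝ} (hf : Differentiable ℝ f) {K : ℝ}
    (hK : ∀ x, |deriv f x| ≤ K * (1 + |x|)) (x : ℝ) :
    |f x| ≤ |f 0| + K * |x| + K * x ^ 2 := by
  have hK0 : 0 ≤ K := by simpa using (abs_nonneg _).trans (hK 0)
  calc |f x| ≤ |f 0| + K * (1 + |x|) * |x| :=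
        abs_le_abs_add_mul_abs_of_abs_deriv_le hf fun u hu => (hK u).trans (by gcongr)
    _ = |f 0| + K * |x| + K * x ^ 2 := by rw [← sq_abs x]; ring

namespace ProbabilityTheory

variable {μ : ℝ} {v : NNReal}

lemma integrable_gaussianReal_of_abs_le {h : ℝ → ℝ}
    (hh : AEStronglyMeasurable h (gaussianReal μ v)) {a b c : ℝ}
    (hb : ∀ x, |h x| ≤ a + b * |x| + c * x ^ 2) : Integrable h (gaussianReal μ v) := by
  have hbound : Integrable (fun x => a + b * |x| + c * x ^ 2) (gaussianReal μ v) :=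
    ((integrable_const a).add (IsGaussian.integrable_id.abs.const_mul b)).add
      ((memLp_id_gaussianReal 2).integrable_sq.const_mul c)
  exact hbound.mono' hh (ae_of_all _ hb)

lemma integrable_gaussianReal_iff_integrable_gaussianPDFReal_mul (hv : v ≠ 0) {g : ℝ → ℝ} :
    Integrable g (gaussianReal μ v) ↔ Integrable (fun x => gaussianPDFReal μ v x * g x) := by
  rw [gaussianReal_of_var_ne_zero _ hv, integrable_withDensity_iff_integrable_smul'
    (measurable_gaussianPDF _ _) (ae_of_all _ fun _ => gaussianPDF_lt_top)]
  simp

lemma hasDerivAt_gaussianPDFReal (μ : ℝ) (v : NNReal) (x : ℝ) :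
    HasDerivAt (gaussianPDFReal μ v) (-((x - μ) / v) * gaussianPDFReal μ v x) x := by
  have hexp : HasDerivAt (fun x => -(x - μ) ^ 2 / (2 * v)) (-((x - μ) / v)) x :=
    ((((hasDerivAt_id' x).sub_const μ).pow 2).neg.div_const _).congr_deriv (by ring)
  refine (hexp.exp.const_mul (√(2 * π * v))⁻¹).congr_deriv ?_
  simp only [gaussianPDFReal]
  ring

/-- **Stein's lemma** (Gaussian integration by parts). -/
theorem integral_sub_mul_gaussianReal (hv : v ≠ 0) {g g' : ℝ → ℝ}
    (hg : ∀ x, HasDerivAt g (g' x) x) (hg_int : Integrable g (gaussianReal μ v))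
    (hg'_int : Integrable g' (gaussianReal μ v))
    (hxg_int : Integrable (fun x => (x - μ) * g x) (gaussianReal μ v)) :
    ∫ x, (x - μ) * g x ∂gaussianReal μ v = v * ∫ x, g' x ∂gaussianReal μ v := by
  have hφ : ∀ x, HasDerivAt (fun x => -(v * gaussianPDFReal μ v x))
      ((x - μ) * gaussianPDFReal μ v x) x := fun x =>
    ((hasDerivAt_gaussianPDFReal μ v x).const_mul (v : ℝ)).neg.congr_deriv (by
      field_simp [NNReal.coe_ne_zero.mpr hv])
  rw [integrable_gaussianReal_iff_integrable_gaussianPDFReal_mul hv] at hg_int hg'_int hxg_int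
  have ibp := integral_mul_deriv_eq_deriv_mul_of_integrable (fun x _ => hg x) (fun x _ => hφ x)
    (hxg_int.congr (ae_of_all _ fun x => by simp only [Pi.mul_apply]; ring))
    ((hg'_int.const_mul (-v)).congr (ae_of_all _ fun x => by simp only [Pi.mul_apply]; ring))
    ((hg_int.const_mul (-v)).congr (ae_of_all _ fun x => by simp only [Pi.mul_apply]; ring))
  simp only [mul_neg, integral_neg, neg_neg] at ibp
  simp only [integral_gaussianReal_eq_integral_smul hv, smul_eq_mul, ← integral_const_mul]
  calc ∫ x, gaussianPDFReal μ v x * ((x - μ) * g x)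
      = ∫ x, g x * ((x - μ) * gaussianPDFReal μ v x) := by congr 1; ext x; ring
    _ = ∫ x, g' x * (v * gaussianPDFReal μ v x) := ibp
    _ = ∫ x, v * (gaussianPDFReal μ v x * g' x) := by congr 1; ext x; ring

lemma integrable_comp_mul_gaussianReal {h : ℝ → ℝ} (hh : Measurable h) {K : ℝ}
    (hK : ∀ x, |h x| ≤ K * (1 + |x|)) (a : ℝ) :
    Integrable (fun y => h (y * a)) (gaussianReal μ v) := by
  refine integrable_gaussianReal_of_abs_le (hh.comp (measurable_mul_const a)).aestronglyMeasurable
    (a := K) (b := K * |a|) (c := 0) fun y => ?_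
  calc |h (y * a)| ≤ K * (1 + |y| * |a|) := by simpa [abs_mul] using hK (y * a)
    _ = K + K * |a| * |y| + 0 * y ^ 2 := by ring

lemma integrable_mul_comp_mul_gaussianReal {h : ℝ → ℝ} (hh : Measurable h) {K : ℝ}
    (hK : ∀ x, |h x| ≤ K * (1 + |x|)) (a : ℝ) :
    Integrable (fun y => y * h (y * a)) (gaussianReal μ v) := by
  refine integrable_gaussianReal_of_abs_le
    (measurable_id.mul (hh.comp (measurable_mul_const a))).aestronglyMeasurable
    (a := 0) (b := K) (c := K * |a|) fun y => ?_
  calc |y * h (y * a)| ≤ |y| * (K * (1 + |y| * |a|)) := by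
        rw [abs_mul]; gcongr; simpa [abs_mul] using hK (y * a)
    _ = 0 + K * |y| + K * |a| * y ^ 2 := by rw [← sq_abs y]; ring

theorem hasDerivAt_integral_comp_mul_gaussianReal {f : ℝ → ℝ} (hf : Differentiable ℝ f) {K : ℝ}
    (hK : ∀ x, |deriv f x| ≤ K * (1 + |x|)) (a : ℝ) :
    HasDerivAt (fun t => ∫ y, f (y * t) ∂gaussianReal μ v)
      (∫ y, y * deriv f (y * a) ∂gaussianReal μ v) a := by
  have hK0 : 0 ≤ K := by simpa using (abs_nonneg _).trans (hK 0)
  refine (hasDerivAt_integral_of_dominated_loc_of_deriv_le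
    (F' := fun t y => y * deriv f (y * t)) (bound := fun y => K * |y| + K * (|a| + 1) * y ^ 2)
    (Metric.ball_mem_nhds a one_pos) ?_ ?_ ?_ ?_ ?_ ?_).2
  · exact Filter.Eventually.of_forall fun t =>
      (hf.continuous.comp (continuous_mul_const t)).aestronglyMeasurable
  · refine integrable_gaussianReal_of_abs_le
      (hf.continuous.comp (continuous_mul_const a)).aestronglyMeasurable
      (a := |f 0|) (b := K * |a|) (c := K * a ^ 2) fun y => ?_
    calc |f (y * a)| ≤ |f 0| + K * |y * a| + K * (y * a) ^ 2 :=
          abs_le_of_abs_deriv_le_mul_one_add_abs hf hK (y * a)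
      _ = |f 0| + K * |a| * |y| + K * a ^ 2 * y ^ 2 := by rw [abs_mul]; ring
  · exact (integrable_mul_comp_mul_gaussianReal (measurable_deriv f) hK a).aestronglyMeasurable
  · refine ae_of_all _ fun y t ht => ?_
    have ht' : |t| ≤ |a| + 1 := by
      rw [Metric.mem_ball, Real.dist_eq] at ht
      linarith [abs_sub_abs_le_abs_sub t a]
    calc ‖y * deriv f (y * t)‖ ≤ |y| * (K * (1 + |y| * |t|)) := by
          rw [Real.norm_eq_abs, abs_mul]; gcongr; simpa [abs_mul] using hK (y * t)
      _ ≤ |y| * (K * (1 + |y| * (|a| + 1))) := by gcongr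
      _ = K * |y| + K * (|a| + 1) * y ^ 2 := by rw [← sq_abs y]; ring
  · refine integrable_gaussianReal_of_abs_le (by fun_prop) (a := 0) (b := K) (c := K * (|a| + 1))
      fun y => ?_
    rw [abs_of_nonneg (by positivity), zero_add]
  · exact ae_of_all _ fun y t _ =>
      ((hf (y * t)).hasDerivAt.comp t ((hasDerivAt_id' t).const_mul y)).congr_deriv (by ring)

end ProbabilityTheory

theorem stmt_4_general (q : ℝ) (f : ℝ → ℝ)
    (hf : ContDiff ℝ 2 f) (C : ℝ) (hC : ∀ x : ℝ, |deriv (deriv f) x| ≤ C) :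
    ∀ s ∈ Set.Ioc q 1,
      HasDerivAt (fun t : ℝ => ∫ y, f (y * Real.sqrt (t - q)) ∂γ)
        ((1 / 2) * ∫ y, deriv (deriv f) (y * Real.sqrt (s - q)) ∂γ) s := by
  rintro s ⟨hqs, -⟩
  have hC0 : 0 ≤ C := (abs_nonneg _).trans (hC 0)
  have hf' : Differentiable ℝ (deriv f) := hf.differentiable_deriv_two
  have hf'_growth : ∀ x, |deriv f x| ≤ (|deriv f 0| + C) * (1 + |x|) := fun x => by
    have := abs_le_abs_add_mul_abs_of_abs_deriv_le hf' (x := x) fun u _ => hC u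
    nlinarith [abs_nonneg x, abs_nonneg (deriv f 0)]
  have hf''_growth : ∀ x, |deriv (deriv f) x| ≤ C * (1 + |x|) := fun x =>
    (hC x).trans (le_mul_of_one_le_right hC0 (by linarith [abs_nonneg x]))
  set a := √(s - q)
  have hstein : ∫ y, y * deriv f (y * a) ∂γ = a * ∫ y, deriv (deriv f) (y * a) ∂γ := by
    have := integral_sub_mul_gaussianReal one_ne_zero (μ := 0) (g := fun y => deriv f (y * a))
      (g' := fun y => deriv (deriv f) (y * a) * a)
      (fun y => ((hf' (y * a)).hasDerivAt.comp y (hasDerivAt_mul_const a) :))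
      (integrable_comp_mul_gaussianReal (measurable_deriv f) hf'_growth a)
      ((integrable_comp_mul_gaussianReal (measurable_deriv _) hf''_growth a).mul_const a)
      (by simpa using integrable_mul_comp_mul_gaussianReal (measurable_deriv f) hf'_growth a)
    simp only [sub_zero, NNReal.coe_one, one_mul, integral_mul_const] at this
    rw [this, mul_comm]
  refine ((hasDerivAt_integral_comp_mul_gaussianReal (hf.differentiable two_ne_zero) hf'_growth
    a).comp s (((hasDerivAt_id' s).sub_const q).sqrt (sub_pos.mpr hqs).ne')).congr_deriv ?_
  rw [hstein]
  field_simp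
  exact mul_comm _ _

/-- Let `q ∈ [0,1)` and `f : ℝ → ℝ` be twice continuously differentiable with bounded
second derivative. Then for every `s ∈ (q,1]`, the function
`s ↦ ∫ f(y√(s−q)) dγ(y)` is differentiable at `s` with derivative
`(1/2) ∫ f''(y√(s−q)) dγ(y)`. -/
theorem stmt_4 (q : ℝ) (hq : q ∈ Set.Ico (0 : ℝ) 1) (f : ℝ → ℝ)
    (hf : ContDiff ℝ 2 f) (C : ℝ) (hC : ∀ x : ℝ, |deriv (deriv f) x| ≤ C) :
    ∀ s ∈ Set.Ioc q 1,
      HasDerivAt (fun t : ℝ => ∫ y, f (y * Real.sqrt (t - q)) ∂γ)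
        ((1 / 2) * ∫ y, deriv (deriv f) (y * Real.sqrt (s - q)) ∂γ) s :=
  stmt_4_general q f hf C hC
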